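/- arXiv:2508.06144 — 3 statements merged into one kernel-verified Lean document; each statement's English description precedes it below -/
import Mathlib

section
/- Let $H$, $Y$, $U$ be Hilbert spaces, let $A$ be skew-adjoint generating a unitary group on $H$, and $B\in\mathcal{L}(U,H)$, $C\in\mathcal{L}(H,Y)$, $K\in\mathcal{L}(Y,U)$. Let $z\in C^1([t_k,t_{k+1});H)$ solve $\dot z(t) = Az(t) + BKCz(t_k)$ with $z(t)\in\mathcal{D}(A)$, and suppose the triggering condition $\|C(z(t)-z(t_k))\|_Y \le \gamma\|z(t)\|_H$ holds on $[t_k,t_{k+1})$. Then $\big|\frac{d}{dt}\|z(t)\|_H^2\big| \le 2(\|BKC\|_{\mathcal{L}(H)} + \gamma\|BK\|_{\mathcal{L}(Y,H)})\|z(t)\|_H^2$ for all $t\in[t_k,t_{k+1})$. -/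
/-!
Since `A` is skew, `d/dt ‖z‖² = 2⟪z, Az + BKC z(t_k)⟫ = 2⟪BKC z(t_k), z⟫`. Writing
`BKC z(t_k) = BKC z(t) - BK C(z(t) - z(t_k))`, the first term is bounded by `‖BKC‖ ‖z‖²` and,
by the triggering condition, the second by `γ ‖BK‖ ‖z‖²`.
-/

open Set
open scoped RealInnerProductSpace

section

variable {H Y : Type*} [NormedAddCommGroup H] [InnerProductSpace ℝ H]

theorem HasDerivAt.norm_sq_of_inner_eq_zero {z : ℝ → H} {a b : H} {t : ℝ}
    (hz : HasDerivAt z (a + b) t) (ha : ⟪a, z t⟫ = 0) :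
    HasDerivAt (‖z ·‖ ^ 2) (2 * ⟪b, z t⟫) t := by
  have hderiv := hz.norm_sq
  rwa [inner_add_right, real_inner_comm a, ha, zero_add, real_inner_comm] at hderiv

theorem abs_inner_apply_comp_le_of_norm_sub_le [NormedAddCommGroup Y] [NormedSpace ℝ Y]
    (L : Y →L[ℝ] H) (C : H →L[ℝ] Y) {x x₀ : H} {γ : ℝ} (hx : ‖C (x - x₀)‖ ≤ γ * ‖x‖) :
    |⟪L (C x₀), x⟫| ≤ (‖L.comp C‖ + γ * ‖L‖) * ‖x‖ ^ 2 := by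
  have hsplit : L (C x₀) = L.comp C x - L (C (x - x₀)) := by simp
  have hnorm : ‖L (C x₀)‖ ≤ (‖L.comp C‖ + γ * ‖L‖) * ‖x‖ := by
    calc ‖L (C x₀)‖ ≤ ‖L.comp C x‖ + ‖L (C (x - x₀))‖ := hsplit ▸ norm_sub_le _ _
      _ ≤ ‖L.comp C‖ * ‖x‖ + ‖L‖ * (γ * ‖x‖) :=
          add_le_add ((L.comp C).le_opNorm x) ((L.le_opNorm _).trans (by gcongr))
      _ = (‖L.comp C‖ + γ * ‖L‖) * ‖x‖ := by ring
  calc |⟪L (C x₀), x⟫| ≤ ‖L (C x₀)‖ * ‖x‖ := abs_real_inner_le_norm _ _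
    _ ≤ (‖L.comp C‖ + γ * ‖L‖) * ‖x‖ * ‖x‖ := by gcongr
    _ = (‖L.comp C‖ + γ * ‖L‖) * ‖x‖ ^ 2 := by ring

end

theorem stmt_5_general
    {H Y U : Type*}
    [NormedAddCommGroup H] [InnerProductSpace ℝ H]
    [NormedAddCommGroup Y] [InnerProductSpace ℝ Y]
    [NormedAddCommGroup U] [InnerProductSpace ℝ U]
    (D : Set H) (A : H → H)
    (hskew : ∀ w ∈ D, ⟪A w, w⟫ = 0)
    (B : U →L[ℝ] H) (C : H →L[ℝ] Y) (K : Y →L[ℝ] U)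
    (tk tk1 γ : ℝ)
    (z : ℝ → H)
    (hzD : ∀ t ∈ Ico tk tk1, z t ∈ D)
    (hODE : ∀ t ∈ Ico tk tk1, HasDerivAt z (A (z t) + B (K (C (z tk)))) t)
    (htrig : ∀ t ∈ Ico tk tk1, ‖C (z t - z tk)‖ ≤ γ * ‖z t‖) :
    ∀ t ∈ Ico tk tk1, ∃ d : ℝ, HasDerivAt (fun s => ‖z s‖ ^ 2) d t ∧
      |d| ≤ 2 * (‖(B.comp K).comp C‖ + γ * ‖B.comp K‖) * ‖z t‖ ^ 2 := by
  intro t ht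
  refine ⟨_, (hODE t ht).norm_sq_of_inner_eq_zero (hskew _ (hzD t ht)), ?_⟩
  have hbound := abs_inner_apply_comp_le_of_norm_sub_le (B.comp K) C (htrig t ht)
  rw [abs_mul, abs_two, mul_assoc]
  exact mul_le_mul_of_nonneg_left hbound zero_le_two

/-- energy derivative estimate under the triggering condition. -/
theorem stmt_5
    {H Y U : Type*}
    [NormedAddCommGroup H] [InnerProductSpace ℝ H] [CompleteSpace H]
    [NormedAddCommGroup Y] [InnerProductSpace ℝ Y] [CompleteSpace Y]
    [NormedAddCommGroup U] [InnerProductSpace ℝ U] [CompleteSpace U]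
    (D : Set H) (A : H → H)
    (hskew : ∀ w ∈ D, ⟪A w, w⟫ = 0)
    (B : U →L[ℝ] H) (C : H →L[ℝ] Y) (K : Y →L[ℝ] U)
    (tk tk1 γ : ℝ) (htk : tk < tk1) (hγ : 0 < γ)
    (z : ℝ → H)
    (hzD : ∀ t ∈ Ico tk tk1, z t ∈ D)
    (hODE : ∀ t ∈ Ico tk tk1, HasDerivAt z (A (z t) + B (K (C (z tk)))) t)
    (htrig : ∀ t ∈ Ico tk tk1, ‖C (z t - z tk)‖ ≤ γ * ‖z t‖) :
    ∀ t ∈ Ico tk tk1, ∃ d : ℝ, HasDerivAt (fun s => ‖z s‖ ^ 2) d t ∧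
      |d| ≤ 2 * (‖(B.comp K).comp C‖ + γ * ‖B.comp K‖) * ‖z t‖ ^ 2 :=
  stmt_5_general D A hskew B C K tk tk1 γ z hzD hODE htrig
end

section
/- Let $z\in C^1([t_k,t_{k+1}];H)$ with $C\in\mathcal{L}(H,Y)$, and set $\psi_k(t)=\|C(z(t)-z(t_k))\|_Y^2$. Suppose $\psi_k(t)\le \gamma^2\|z(t)\|_H^2$ on $[t_k,t_{k+1})$ and $\psi_k(t_{k+1}) = \gamma^2\|z(t_{k+1})\|_H^2$. Then $\gamma^2\|z(t_{k+1})\|_H^2 \le 2\gamma\|C\|_{\mathcal{L}(H,Y)}\,(t_{k+1}-t_k)\,\sup_{[t_k,t_{k+1}]}\|\dot z\|_H\,\sup_{[t_k,t_{k+1}]}\|z\|_H$, and consequently, if $z(t_{k+1})\ne 0$, $t_{k+1}-t_k \ge \dfrac{\gamma\,\|z(t_{k+1})\|_H^2}{2\|C\|_{\mathcal{L}(H,Y)}\sup\|\dot z\|_H\,\sup\|z\|_H}$. -/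
/-!
At the triggering time the saturation identity gives `γ ‖z(t₁)‖ = ‖C (z(t₁) - z(t₀))‖`, and the
mean value inequality bounds `‖z(t₁) - z(t₀)‖` by `(t₁ - t₀) sup ‖ż‖`. Multiplying by
`‖z(t₁)‖ ≤ sup ‖z‖` gives `γ ‖z(t₁)‖² ≤ ‖C‖ (t₁ - t₀) sup ‖ż‖ sup ‖z‖`, from which both the
energy bound and the lower bound on the inter-sampling time follow.
-/

open Set

theorem ContinuousLinearMap.mul_sq_norm_le_of_sq_norm_apply_eq {E F : Type*}
    [SeminormedAddCommGroup E] [NormedSpace ℝ E] [SeminormedAddCommGroup F] [NormedSpace ℝ F]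
    (C : E →L[ℝ] F) {γ : ℝ} (hγ : 0 ≤ γ) {d w : E} (h : ‖C d‖ ^ 2 = γ ^ 2 * ‖w‖ ^ 2) :
    γ * ‖w‖ ^ 2 ≤ ‖C‖ * ‖d‖ * ‖w‖ := by
  have hsat : ‖C d‖ = γ * ‖w‖ :=
    (sq_eq_sq₀ (norm_nonneg _) (by positivity)).1 (by rw [h]; ring)
  calc γ * ‖w‖ ^ 2 = ‖C d‖ * ‖w‖ := by rw [hsat]; ring
    _ ≤ ‖C‖ * ‖d‖ * ‖w‖ := by gcongr; exact C.le_opNorm d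

theorem stmt_9_general
    {H Y : Type*}
    [NormedAddCommGroup H] [InnerProductSpace ℝ H]
    [NormedAddCommGroup Y] [InnerProductSpace ℝ Y]
    (C : H →L[ℝ] Y) (γ : ℝ) (hγ : 0 < γ)
    (tk tk1 : ℝ) (htk : tk < tk1)
    (z z' : ℝ → H)
    (hz : ∀ t ∈ Icc tk tk1, HasDerivAt z (z' t) t)
    (Mz Md : ℝ)
    (hMz : ∀ t ∈ Icc tk tk1, ‖z t‖ ≤ Mz)
    (hMd : ∀ t ∈ Icc tk tk1, ‖z' t‖ ≤ Md)
    (hsat : ‖C (z tk1 - z tk)‖ ^ 2 = γ ^ 2 * ‖z tk1‖ ^ 2) :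
    γ ^ 2 * ‖z tk1‖ ^ 2 ≤ 2 * γ * ‖C‖ * (tk1 - tk) * Md * Mz ∧
      (z tk1 ≠ 0 → 0 < Md → 0 < Mz →
        γ * ‖z tk1‖ ^ 2 / (2 * ‖C‖ * Md * Mz) ≤ tk1 - tk) := by
  have htk1 : tk1 ∈ Icc tk tk1 := right_mem_Icc.2 htk.le
  have hmv : ‖z tk1 - z tk‖ ≤ Md * (tk1 - tk) :=
    norm_image_sub_le_of_norm_deriv_le_segment' (fun t ht => (hz t ht).hasDerivWithinAt)
      (fun t ht => hMd t (Ico_subset_Icc_self ht)) tk1 htk1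
  have hsharp : γ * ‖z tk1‖ ^ 2 ≤ ‖C‖ * (tk1 - tk) * Md * Mz :=
    calc γ * ‖z tk1‖ ^ 2 ≤ ‖C‖ * ‖z tk1 - z tk‖ * ‖z tk1‖ :=
          C.mul_sq_norm_le_of_sq_norm_apply_eq hγ.le hsat
      _ ≤ ‖C‖ * (Md * (tk1 - tk)) * Mz := by
          have hMd0 : 0 ≤ Md := (norm_nonneg _).trans (hMd tk1 htk1)
          gcongr
          exact hMz tk1 htk1
      _ = ‖C‖ * (tk1 - tk) * Md * Mz := by ring
  have hrhs : 0 ≤ ‖C‖ * (tk1 - tk) * Md * Mz :=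
    (by positivity : 0 ≤ γ * ‖z tk1‖ ^ 2).trans hsharp
  refine ⟨by nlinarith, fun _ hMd_pos hMz_pos => ?_⟩
  exact div_le_of_le_mul₀ (by positivity) (sub_nonneg.2 htk.le) (by linarith)

/-- lower bound on the inter-sampling time from the saturated triggering law. -/
theorem stmt_9
    {H Y : Type*}
    [NormedAddCommGroup H] [InnerProductSpace ℝ H] [CompleteSpace H]
    [NormedAddCommGroup Y] [InnerProductSpace ℝ Y] [CompleteSpace Y]
    (C : H →L[ℝ] Y) (γ : ℝ) (hγ : 0 < γ)
    (tk tk1 : ℝ) (htk : tk < tk1)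
    (z z' : ℝ → H)
    (hz : ∀ t ∈ Icc tk tk1, HasDerivAt z (z' t) t)
    (hz'cont : ContinuousOn z' (Icc tk tk1))
    (Mz Md : ℝ)
    (hMz : ∀ t ∈ Icc tk tk1, ‖z t‖ ≤ Mz)
    (hMd : ∀ t ∈ Icc tk tk1, ‖z' t‖ ≤ Md)
    (htrig : ∀ t ∈ Ico tk tk1, ‖C (z t - z tk)‖ ^ 2 ≤ γ ^ 2 * ‖z t‖ ^ 2)
    (hsat : ‖C (z tk1 - z tk)‖ ^ 2 = γ ^ 2 * ‖z tk1‖ ^ 2) :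
    γ ^ 2 * ‖z tk1‖ ^ 2 ≤ 2 * γ * ‖C‖ * (tk1 - tk) * Md * Mz ∧
      (z tk1 ≠ 0 → 0 < Md → 0 < Mz →
        γ * ‖z tk1‖ ^ 2 / (2 * ‖C‖ * Md * Mz) ≤ tk1 - tk) :=
  stmt_9_general C γ hγ tk tk1 htk z z' hz Mz Md hMz hMd hsat
end

section
/- Let $V:H\to\mathbb{R}_{\ge0}$ be a functional on a Hilbert space $H$ with Fréchet gradient $\nabla V$, and constants $C_0, C_1>0$ with $C_1\|w\|^2\le V(w)$ and $\|\nabla V(w)\|\le C_0\sqrt{V(w)}$ for all $w$, and $\langle \nabla V(w), (A+BKC)w\rangle \le -2\beta V(w)$ for $w\in\mathcal{D}(A)$. If $z\in C^1([t_k,t_{k+1});H)$ solves $\dot z = (A+BKC)z + BK e_k(t)$ with $\|e_k(t)\|_Y\le \gamma\|z(t)\|_H$, then $\frac{d}{dt}V(z(t)) \le -\big(2\beta - \frac{C_0\gamma}{\sqrt{C_1}}\|BK\|_{\mathcal{L}(Y,H)}\big) V(z(t))$ for all $t\in[t_k,t_{k+1})$. -/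
open Set
open scoped RealInnerProductSpace

/-! The nominal dynamics `AL` decays `V` at rate `2β`. The perturbation `BK e` is controlled by
Cauchy–Schwarz: `‖∇V(z)‖ ≤ C₀ √V(z)` and `‖e‖ ≤ γ ‖z‖ ≤ γ √V(z) / √C₁`, so its contribution to
`d/dt V(z)` is at most `C₀ γ ‖BK‖ / √C₁ · V(z)`, quadratic in `√V(z)` just like the decay term. -/

lemma Real.le_sqrt_div_sqrt_of_mul_sq_le {x v c : ℝ} (hc : 0 < c) (h : c * x ^ 2 ≤ v) :
    x ≤ √v / √c := by
  rw [← Real.sqrt_div' v hc.le]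
  exact Real.le_sqrt_of_sq_le (by rwa [le_div_iff₀' hc])

section Perturbation

variable {H Y : Type*} [NormedAddCommGroup H] [InnerProductSpace ℝ H]
  [NormedAddCommGroup Y] [NormedSpace ℝ Y]

lemma inner_apply_le_of_norm_le_sqrt {T : Y →L[ℝ] H} {g w : H} {e : Y} {v C₀ C₁ γ : ℝ}
    (hv : 0 ≤ v) (hC₁ : 0 < C₁) (hγ : 0 ≤ γ) (hw : C₁ * ‖w‖ ^ 2 ≤ v)
    (hg : ‖g‖ ≤ C₀ * √v) (he : ‖e‖ ≤ γ * ‖w‖) :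
    ⟪g, T e⟫ ≤ C₀ * γ / √C₁ * ‖T‖ * v := by
  have hTe : ‖T e‖ ≤ ‖T‖ * (γ * (√v / √C₁)) :=
    calc ‖T e‖ ≤ ‖T‖ * ‖e‖ := T.le_opNorm e
      _ ≤ ‖T‖ * (γ * (√v / √C₁)) := by
        gcongr
        exact he.trans (by gcongr; exact Real.le_sqrt_div_sqrt_of_mul_sq_le hC₁ hw)
  calc ⟪g, T e⟫ ≤ ‖g‖ * ‖T e‖ := real_inner_le_norm g (T e)
    _ ≤ C₀ * √v * (‖T‖ * (γ * (√v / √C₁))) :=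
        mul_le_mul hg hTe (norm_nonneg _) ((norm_nonneg g).trans hg)
    _ = C₀ * γ / √C₁ * ‖T‖ * (√v * √v) := by ring
    _ = C₀ * γ / √C₁ * ‖T‖ * v := by rw [Real.mul_self_sqrt hv]

end Perturbation

theorem stmt_10_general
    {H Y U : Type*}
    [NormedAddCommGroup H] [InnerProductSpace ℝ H]
    [NormedAddCommGroup Y] [InnerProductSpace ℝ Y]
    [NormedAddCommGroup U] [InnerProductSpace ℝ U]
    (B : U →L[ℝ] H) (K : Y →L[ℝ] U)
    (V : H → ℝ) (gradV : H → H)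
    (C₀ C₁ β γ : ℝ) (hC₁ : 0 < C₁) (hγ : 0 < γ)
    (hVpos : ∀ w : H, 0 ≤ V w)
    (hlow : ∀ w : H, C₁ * ‖w‖ ^ 2 ≤ V w)
    (hgradbound : ∀ w : H, ‖gradV w‖ ≤ C₀ * Real.sqrt (V w))
    (D : Set H) (AL : H → H)
    (hLyap : ∀ w ∈ D, ⟪gradV w, AL w⟫ ≤ -(2 * β) * V w)
    (tk tk1 : ℝ)
    (z : ℝ → H) (e : ℝ → Y)
    (hzD : ∀ t ∈ Ico tk tk1, z t ∈ D)
    (he : ∀ t ∈ Ico tk tk1, ‖e t‖ ≤ γ * ‖z t‖) :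
    ∀ t ∈ Ico tk tk1,
      ⟪gradV (z t), AL (z t) + B (K (e t))⟫ ≤
        -(2 * β - C₀ * γ / Real.sqrt C₁ * ‖B.comp K‖) * V (z t) := by
  intro t ht
  have hdecay := hLyap (z t) (hzD t ht)
  have hperturb : ⟪gradV (z t), (B.comp K) (e t)⟫ ≤ C₀ * γ / √C₁ * ‖B.comp K‖ * V (z t) :=
    inner_apply_le_of_norm_le_sqrt (hVpos _) hC₁ hγ.le (hlow _) (hgradbound _) (he t ht)
  rw [inner_add_right]
  exact (add_le_add hdecay hperturb).trans_eq (by ring)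

/-- decay of a Lyapunov functional along the perturbed closed-loop dynamics. -/
theorem stmt_10
    {H Y U : Type*}
    [NormedAddCommGroup H] [InnerProductSpace ℝ H] [CompleteSpace H]
    [NormedAddCommGroup Y] [InnerProductSpace ℝ Y] [CompleteSpace Y]
    [NormedAddCommGroup U] [InnerProductSpace ℝ U] [CompleteSpace U]
    (B : U →L[ℝ] H) (K : Y →L[ℝ] U)
    (V : H → ℝ) (gradV : H → H)
    (C₀ C₁ β γ : ℝ) (hC₀ : 0 < C₀) (hC₁ : 0 < C₁) (hβ : 0 < β) (hγ : 0 < γ)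
    (hVpos : ∀ w : H, 0 ≤ V w)
    (hlow : ∀ w : H, C₁ * ‖w‖ ^ 2 ≤ V w)
    (hgradbound : ∀ w : H, ‖gradV w‖ ≤ C₀ * Real.sqrt (V w))
    (D : Set H) (AL : H → H)
    (hLyap : ∀ w ∈ D, ⟪gradV w, AL w⟫ ≤ -(2 * β) * V w)
    (tk tk1 : ℝ) (htk : tk < tk1)
    (z : ℝ → H) (e : ℝ → Y)
    (hzD : ∀ t ∈ Ico tk tk1, z t ∈ D)
    (he : ∀ t ∈ Ico tk tk1, ‖e t‖ ≤ γ * ‖z t‖)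
    (hODE : ∀ t ∈ Ico tk tk1, HasDerivAt z (AL (z t) + B (K (e t))) t)
    (hchain : ∀ t ∈ Ico tk tk1,
      HasDerivAt (fun s => V (z s)) (⟪gradV (z t), AL (z t) + B (K (e t))⟫) t) :
    ∀ t ∈ Ico tk tk1,
      ⟪gradV (z t), AL (z t) + B (K (e t))⟫ ≤
        -(2 * β - C₀ * γ / Real.sqrt C₁ * ‖B.comp K‖) * V (z t) :=
  stmt_10_general B K V gradV C₀ C₁ β γ hC₁ hγ hVpos hlow hgradbound D AL hLyap tk tk1 z e hzD he
end
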